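/- arXiv:1710.08497 — 11 statements merged into one kernel-verified Lean document; each statement's English description precedes it below -/
import Mathlib

section
/- For any c > 0, the function f(t) = (1 + c - (c^t + c^{1-t})) / (t(1-t)) is convex on the open interval (0,1). -/
/-!
With `a = log c`, the numerator factors as `(c ^ t - 1) * (c ^ (1 - t) - 1)`, and
`(c ^ s - 1) / s = ∫ u in 0..1, a * exp (a * s * u)`. Hence on `(0, 1)` the function is the
integral over the unit square of `a ^ 2 * exp (a * (t * u + (1 - t) * v))`; each integrand is the
exponential of an affine function of `t`, so convex, and an integral of convex functions is convex.
-/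

open Real Set MeasureTheory

lemma convexOn_exp_mul_add (m q : ℝ) : ConvexOn ℝ univ fun t => exp (m * t + q) :=
  (convexOn_exp.comp_affineMap (m • AffineMap.id ℝ ℝ + AffineMap.const ℝ ℝ q)).congr
    fun t _ => by simp

lemma intervalIntegral_mul_exp_mul (a : ℝ) {s : ℝ} (hs : s ≠ 0) :
    ∫ u in (0:ℝ)..1, a * exp (a * s * u) = (exp (a * s) - 1) / s := by
  have hderiv : ∀ u ∈ uIcc (0:ℝ) 1,
      HasDerivAt (fun u => exp (a * s * u) / s) (a * exp (a * s * u)) u := fun u _ =>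
    ((((hasDerivAt_id u).const_mul (a * s)).exp).div_const s).congr_deriv
      (by rw [id]; field_simp)
  rw [intervalIntegral.integral_eq_sub_of_hasDerivAt hderiv
    (Continuous.intervalIntegrable (by fun_prop) _ _)]
  simp [sub_div]

lemma rpow_sub_one_div_eq_intervalIntegral {c : ℝ} (hc : 0 < c) {s : ℝ} (hs : s ≠ 0) :
    (c ^ s - 1) / s = ∫ u in (0:ℝ)..1, log c * exp (log c * s * u) := by
  rw [intervalIntegral_mul_exp_mul _ hs, rpow_def_of_pos hc]

lemma one_add_sub_rpow_add_rpow_one_sub {c : ℝ} (hc : 0 < c) (t : ℝ) :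
    1 + c - (c ^ t + c ^ (1 - t)) = (c ^ t - 1) * (c ^ (1 - t) - 1) := by
  have hprod : c ^ t * c ^ (1 - t) = c := by
    rw [← rpow_add hc, add_sub_cancel, rpow_one]
  linear_combination -hprod

lemma one_add_sub_rpow_div_eq_setIntegral {c : ℝ} (hc : 0 < c) {t : ℝ} (ht₀ : t ≠ 0)
    (ht₁ : t ≠ 1) :
    (1 + c - (c ^ t + c ^ (1 - t))) / (t * (1 - t)) =
      ∫ ω in Icc (0:ℝ) 1 ×ˢ Icc (0:ℝ) 1, log c ^ 2 * exp (log c * (t * ω.1 + (1 - t) * ω.2)) := by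
  have hfactor : ∀ ω : ℝ × ℝ, log c ^ 2 * exp (log c * (t * ω.1 + (1 - t) * ω.2)) =
      log c * exp (log c * t * ω.1) * (log c * exp (log c * (1 - t) * ω.2)) := fun ω => by
    rw [mul_add, ← mul_assoc, ← mul_assoc, exp_add]
    ring
  rw [one_add_sub_rpow_add_rpow_one_sub hc, mul_div_mul_comm,
    rpow_sub_one_div_eq_intervalIntegral hc ht₀,
    rpow_sub_one_div_eq_intervalIntegral hc (sub_ne_zero.mpr ht₁.symm),
    intervalIntegral.integral_of_le zero_le_one, intervalIntegral.integral_of_le zero_le_one,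
    ← integral_Icc_eq_integral_Ioc, ← integral_Icc_eq_integral_Ioc, ← setIntegral_prod_mul,
    Measure.volume_eq_prod]
  simp_rw [hfactor]

theorem heinz_f_convex (c : ℝ) (hc : 0 < c) :
    ConvexOn ℝ (Set.Ioo (0:ℝ) 1)
      (fun t : ℝ => (1 + c - (c ^ t + c ^ (1 - t))) / (t * (1 - t))) := by
  set g : ℝ × ℝ → ℝ → ℝ := fun ω t => log c ^ 2 * exp (log c * (t * ω.1 + (1 - t) * ω.2))
  have hg_convex : ∀ ω, ConvexOn ℝ univ (g ω) := fun ω =>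
    ((convexOn_exp_mul_add (log c * (ω.1 - ω.2)) (log c * ω.2)).smul (sq_nonneg (log c))).congr
      fun t _ => by simp only [g, smul_eq_mul]; ring_nf
  have hg_integrable : ∀ t ∈ univ, IntegrableOn (g · t) (Icc (0:ℝ) 1 ×ˢ Icc (0:ℝ) 1) :=
    fun t _ => ContinuousOn.integrableOn_compact (isCompact_Icc.prod isCompact_Icc)
      (Continuous.continuousOn (by fun_prop))
  have hconvex := integral_convexOn_of_integrand_ae convex_univ (ae_of_all _ hg_convex)
    hg_integrable
  exact (hconvex.subset (subset_univ _) (convex_Ioo 0 1)).congr fun t ht =>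
    (one_add_sub_rpow_div_eq_setIntegral hc ht.1.ne' ht.2.ne).symm
end

section
/- For all a, b > 0 and 0 ≤ t ≤ 1, one has (a^t b^{1-t} + a^{1-t} b^t) + 4t(1-t)(√a - √b)^2 ≤ a + b. -/
/-!
Writing `a = exp (m + δ)` and `b = exp (m - δ)` with `s = 2t - 1`, the Heinz mean is
`2 √a √b cosh (s δ)`, while `a + b = 2 √a √b cosh δ` and `4t(1-t) = 1 - s²`. The inequality
thus reduces to `cosh (s δ) ≤ s² cosh δ + (1 - s²)` for `s² ≤ 1`, which holds termwise in the
power series of `cosh`, since `(s²)ⁿ ≤ s²` for `n ≥ 1`.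
-/

open Real

theorem Real.cosh_mul_le {s : ℝ} (hs : s ^ 2 ≤ 1) (x : ℝ) :
    cosh (s * x) ≤ s ^ 2 * cosh x + (1 - s ^ 2) := by
  refine hasSum_le (fun n => ?_) (hasSum_cosh (s * x))
    (((hasSum_cosh x).mul_left (s ^ 2)).add (hasSum_ite_eq 0 (1 - s ^ 2)))
  have hterm : 0 ≤ x ^ (2 * n) / ((2 * n).factorial : ℝ) := by
    rw [pow_mul]; positivity
  rcases Nat.eq_zero_or_pos n with rfl | hn
  · simp
  · rw [mul_pow, pow_mul, mul_div_assoc, if_neg hn.ne', add_zero]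
    exact mul_le_mul_of_nonneg_right
      (pow_le_of_le_one (sq_nonneg s) hs hn.ne') hterm

theorem Real.rpow_mul_rpow_add_rpow_mul_rpow_eq_cosh {a b : ℝ} (ha : 0 < a) (hb : 0 < b)
    (t : ℝ) :
    a ^ t * b ^ (1 - t) + a ^ (1 - t) * b ^ t
      = 2 * (√a * √b) * cosh ((2 * t - 1) * ((log a - log b) / 2)) := by
  have hsqrt : ∀ {c : ℝ}, 0 < c → √c = exp (log c / 2) := fun hc => by
    rw [exp_half, exp_log hc]
  rw [rpow_def_of_pos ha, rpow_def_of_pos hb, rpow_def_of_pos ha, rpow_def_of_pos hb,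
    hsqrt ha, hsqrt hb, cosh_eq, mul_comm 2, mul_assoc, mul_div_cancel₀ _ two_ne_zero, mul_add]
  simp only [← exp_add]
  congr 1 <;> congr 1 <;> ring

theorem quadratic_heinz_refinement (a b t : ℝ) (ha : 0 < a) (hb : 0 < b)
    (ht0 : 0 ≤ t) (ht1 : t ≤ 1) :
    (a ^ t * b ^ (1 - t) + a ^ (1 - t) * b ^ t)
      + 4 * t * (1 - t) * (Real.sqrt a - Real.sqrt b) ^ 2 ≤ a + b := by
  have hs : (2 * t - 1) ^ 2 ≤ 1 := by nlinarith
  have hsum : a + b = 2 * (√a * √b) * cosh ((log a - log b) / 2) := by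
    have := rpow_mul_rpow_add_rpow_mul_rpow_eq_cosh ha hb 1
    norm_num at this
    exact this
  have hsq : (√a - √b) ^ 2 = a + b - 2 * (√a * √b) := by
    rw [sub_sq, sq_sqrt ha.le, sq_sqrt hb.le]; ring
  have hP : 0 ≤ 2 * (√a * √b) := by positivity
  rw [rpow_mul_rpow_add_rpow_mul_rpow_eq_cosh ha hb, hsq, hsum]
  nlinarith [mul_le_mul_of_nonneg_left (cosh_mul_le hs ((log a - log b) / 2)) hP]
end

section
/- Let a, b > 0 and 0 < ν < τ ≤ 1/2. Then (a∇b - H_τ(a,b))/(τ(1-τ)) ≤ (a∇b - H_ν(a,b))/(ν(1-ν)), where a∇b = (a+b)/2 and H_t(a,b) = (a^t b^{1-t} + a^{1-t} b^t)/2. -/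
/-! Write `a = exp (m + W)` and `b = exp (m - W)`. Then
`a∇b - H_t(a,b) = 2 √(ab) sinh (t W) sinh ((1 - t) W)`, so the quotient by `t (1 - t)` is
`2 √(ab) W² φ(t W) φ((1 - t) W)` with `φ y = sinh y / y`. Since
`(log φ)'' = 1 / y² - 1 / sinh² y ≥ 0`, `φ` is log-convex on `(0, ∞)`; as `t` increases to `1/2`
the pair `(t W, (1 - t) W)` moves inward with constant sum, so the product decreases. -/

open Real Set

theorem Real.convexOn_log_sinh_sub_log : ConvexOn ℝ (Ioi 0) fun y ↦ log (sinh y) - log y := by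
  have hf' (y : ℝ) (hy : 0 < y) :
      HasDerivAt (fun y ↦ log (sinh y) - log y) (cosh y / sinh y - y⁻¹) y :=
    ((hasDerivAt_sinh y).log (sinh_pos_iff.2 hy).ne').sub (hasDerivAt_log hy.ne')
  have hf'' (y : ℝ) (hy : 0 < y) :
      HasDerivAt (fun y ↦ cosh y / sinh y - y⁻¹) ((y ^ 2)⁻¹ - (sinh y ^ 2)⁻¹) y := by
    have hs : sinh y ≠ 0 := (sinh_pos_iff.2 hy).ne'
    refine (((hasDerivAt_cosh y).div (hasDerivAt_sinh y) hs).sub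
      (hasDerivAt_inv hy.ne')).congr_deriv ?_
    rw [show sinh y * sinh y - cosh y * cosh y = -1 by linear_combination -cosh_sq_sub_sinh_sq y]
    ring
  refine convexOn_of_hasDerivWithinAt2_nonneg (f' := fun y ↦ cosh y / sinh y - y⁻¹)
    (f'' := fun y ↦ (y ^ 2)⁻¹ - (sinh y ^ 2)⁻¹) (convex_Ioi 0)
    (fun y hy ↦ (hf' y hy).continuousAt.continuousWithinAt) ?_ ?_ ?_ <;> rw [interior_Ioi]
  · exact fun y hy ↦ (hf' y hy).hasDerivWithinAt
  · exact fun y hy ↦ (hf'' y hy).hasDerivWithinAt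
  · intro y (hy : 0 < y)
    have : y ^ 2 ≤ sinh y ^ 2 := pow_le_pow_left₀ hy.le (self_lt_sinh_iff.2 hy).le 2
    exact sub_nonneg.2 (inv_anti₀ (by positivity) this)

theorem ConvexOn.map_add_map_le_of_add_eq {s : Set ℝ} {f : ℝ → ℝ} (hf : ConvexOn ℝ s f)
    {p q r u : ℝ} (hp : p ∈ s) (hu : u ∈ s) (hpq : p ≤ q) (hpr : p ≤ r)
    (h : q + r = p + u) :
    f q + f r ≤ f p + f u := by
  obtain rfl : r = p + u - q := by linarith
  rcases (show p ≤ u by linarith).eq_or_lt with rfl | hpu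
  · obtain rfl : q = p := by linarith
    simp
  have hd : u - p ≠ 0 := (sub_pos.2 hpu).ne'
  set l := (u - q) / (u - p)
  have hl₀ : 0 ≤ l := div_nonneg (by linarith) (by linarith)
  have hl₁ : 0 ≤ 1 - l := by rw [one_sub_div hd]; exact div_nonneg (by linarith) (by linarith)
  have hq : l • p + (1 - l) • u = q := by simp only [smul_eq_mul, l]; field_simp; ring
  have hr : (1 - l) • p + l • u = p + u - q := by rw [← hq]; simp only [smul_eq_mul]; ring
  have hfq := hf.2 hp hu hl₀ hl₁ (add_sub_cancel l 1)
  have hfr := hf.2 hp hu hl₁ hl₀ (sub_add_cancel 1 l)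
  rw [hq] at hfq
  rw [hr] at hfr
  simp only [smul_eq_mul] at hfq hfr
  linarith

theorem Real.sinh_div_mul_sinh_div_le {p q r u : ℝ} (hp : 0 < p) (hpq : p ≤ q) (hpr : p ≤ r)
    (h : q + r = p + u) : sinh q / q * (sinh r / r) ≤ sinh p / p * (sinh u / u) := by
  have hu : 0 < u := by linarith
  have hL := convexOn_log_sinh_sub_log.map_add_map_le_of_add_eq hp hu hpq hpr h
  have hexp {y : ℝ} (hy : 0 < y) : sinh y / y = exp (log (sinh y) - log y) := by
    rw [exp_sub, exp_log (sinh_pos_iff.2 hy), exp_log hy]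
  rw [hexp (hp.trans_le hpq), hexp (hp.trans_le hpr), hexp hp, hexp hu, ← exp_add, ← exp_add]
  exact exp_le_exp.2 hL

theorem Real.sinh_mul_sinh_one_sub_div_le (W : ℝ) {ν τ : ℝ} (hν : 0 < ν) (hντ : ν ≤ τ)
    (hτ : τ ≤ 1 / 2) :
    sinh (τ * W) * sinh ((1 - τ) * W) / (τ * (1 - τ)) ≤
      sinh (ν * W) * sinh ((1 - ν) * W) / (ν * (1 - ν)) := by
  wlog hW : 0 < W generalizing W
  · rcases (not_lt.1 hW).eq_or_lt with rfl | hW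
    · simp
    · simpa only [mul_neg, sinh_neg, neg_mul, neg_neg] using this (-W) (neg_pos.2 hW)
  have hscale {t : ℝ} (ht₀ : 0 < t) (ht₁ : t < 1) :
      sinh (t * W) * sinh ((1 - t) * W) / (t * (1 - t)) =
        W ^ 2 * (sinh (t * W) / (t * W) * (sinh ((1 - t) * W) / ((1 - t) * W))) := by
    have : 1 - t ≠ 0 := by linarith
    field_simp
  rw [hscale (hν.trans_le hντ) (by linarith), hscale hν (by linarith)]
  exact mul_le_mul_of_nonneg_left (sinh_div_mul_sinh_div_le (by positivity) (by gcongr)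
    (by gcongr; linarith) (by ring)) (sq_nonneg W)

theorem Real.arithMean_sub_heinzMean_eq_sinh_mul_sinh (m W t : ℝ) :
    (exp (m + W) + exp (m - W)) / 2 -
        (exp (m + W) ^ t * exp (m - W) ^ (1 - t) + exp (m + W) ^ (1 - t) * exp (m - W) ^ t) / 2 =
      2 * exp m * (sinh (t * W) * sinh ((1 - t) * W)) := by
  have hcosh (x : ℝ) : exp m * cosh x = (exp (m + x) + exp (m - x)) / 2 := by
    rw [cosh_eq, exp_add, exp_sub, exp_neg]; ring
  have hpow (s s' : ℝ) (hs : s + s' = 1) :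
      exp (m + W) ^ s * exp (m - W) ^ s' = exp (m + (s - s') * W) := by
    rw [← exp_mul, ← exp_mul, ← exp_add]; congr 1; linear_combination m * hs
  have hcosh_sub :
      cosh W - cosh ((t - (1 - t)) * W) = 2 * (sinh (t * W) * sinh ((1 - t) * W)) := by
    have hadd := cosh_add (t * W) ((1 - t) * W)
    have hsub := cosh_sub (t * W) ((1 - t) * W)
    rw [show t * W + (1 - t) * W = W by ring] at hadd
    rw [show t * W - (1 - t) * W = (t - (1 - t)) * W by ring] at hsub
    rw [hadd, hsub]; ring
  rw [hpow t (1 - t) (by ring), hpow (1 - t) t (by ring),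
    show m + (1 - t - t) * W = m - (t - (1 - t)) * W by ring, ← hcosh, ← hcosh, ← mul_sub,
    hcosh_sub]
  ring

theorem heinz_quadratic_comparison_left (a b ν τ : ℝ) (ha : 0 < a) (hb : 0 < b)
    (hν : 0 < ν) (hντ : ν < τ) (hτ : τ ≤ 1/2) :
    ((a + b) / 2 - (a ^ τ * b ^ (1 - τ) + a ^ (1 - τ) * b ^ τ) / 2) / (τ * (1 - τ)) ≤
    ((a + b) / 2 - (a ^ ν * b ^ (1 - ν) + a ^ (1 - ν) * b ^ ν) / 2) / (ν * (1 - ν)) := by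
  obtain ⟨m, W, rfl, rfl⟩ : ∃ m W, a = exp (m + W) ∧ b = exp (m - W) :=
    ⟨(log a + log b) / 2, (log a - log b) / 2,
      (exp_log ha).symm.trans (congrArg exp (by ring)),
      (exp_log hb).symm.trans (congrArg exp (by ring))⟩
  rw [arithMean_sub_heinzMean_eq_sinh_mul_sinh, arithMean_sub_heinzMean_eq_sinh_mul_sinh,
    mul_div_assoc (2 * exp m), mul_div_assoc (2 * exp m)]
  exact mul_le_mul_of_nonneg_left (sinh_mul_sinh_one_sub_div_le W hν hντ.le hτ) (by positivity)
end

section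
/- Let a, b > 0 and 1/2 ≤ ν < τ < 1. Then (a∇b - H_τ(a,b))/(τ(1-τ)) ≥ (a∇b - H_ν(a,b))/(ν(1-ν)). -/
/-!
Write `a = exp (m + d)`, `b = exp (m - d)` and `s = 2t - 1`. Then
`a∇b - H_t(a, b) = exp m * (cosh d - cosh (s d))` and `t (1 - t) = (1 - s²) / 4`, so the claim is
that `(cosh d - cosh (s d)) / (1 - s²)` is nondecreasing in `s ∈ [0, 1)`. In the power series of
`cosh` the `n`-th term of this quotient is `d^(2n) / (2n)!` times
`(1 - s^(2n)) / (1 - s²) = 1 + s² + ⋯ + s^(2n-2)`, which is nondecreasing in `s ≥ 0`.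
-/

open Real Finset
open scoped Nat

theorem one_sub_pow_mul_one_sub_le {R : Type*} [CommRing R] [LinearOrder R] [IsStrictOrderedRing R]
    {x y : R} (hx : 0 ≤ x) (hxy : x ≤ y) (hy : y ≤ 1) (n : ℕ) :
    (1 - x ^ n) * (1 - y) ≤ (1 - y ^ n) * (1 - x) := by
  rw [← mul_neg_geom_sum x, ← mul_neg_geom_sum y]
  have hsum : ∑ i ∈ range n, x ^ i ≤ ∑ i ∈ range n, y ^ i := by gcongr
  have hprod : 0 ≤ (1 - x) * (1 - y) := mul_nonneg (by linarith) (by linarith)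
  nlinarith

theorem cosh_sub_cosh_mul_one_sub_sq_le (K : ℝ) {s r : ℝ} (hsr : s ^ 2 ≤ r ^ 2) (hr : r ^ 2 ≤ 1) :
    (cosh K - cosh (s * K)) * (1 - r ^ 2) ≤ (cosh K - cosh (r * K)) * (1 - s ^ 2) := by
  have hseries (t : ℝ) : HasSum (fun n ↦ ((K ^ 2) ^ n - (t ^ 2) ^ n * (K ^ 2) ^ n) / (2 * n)!)
      (cosh K - cosh (t * K)) := by
    simpa only [mul_pow, pow_mul, ← sub_div] using (hasSum_cosh K).sub (hasSum_cosh (t * K))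
  refine hasSum_le (fun n ↦ ?_) ((hseries s).mul_right _) ((hseries r).mul_right _)
  have h := mul_le_mul_of_nonneg_left (one_sub_pow_mul_one_sub_le (sq_nonneg s) hsr hr n)
    (by positivity : 0 ≤ (K ^ 2) ^ n / (2 * n)!)
  convert h using 1 <;> ring

theorem exp_arith_mean_sub_heinz_eq (p q t : ℝ) :
    (exp p + exp q) / 2 - (exp (p * t + q * (1 - t)) + exp (p * (1 - t) + q * t)) / 2 =
      exp ((p + q) / 2) * (cosh ((p - q) / 2) - cosh ((2 * t - 1) * ((p - q) / 2))) := by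
  simp only [cosh_eq, mul_sub, mul_add, ← exp_add, mul_div_assoc']
  ring_nf

theorem heinz_quadratic_comparison_right (a b ν τ : ℝ) (ha : 0 < a) (hb : 0 < b)
    (hν : 1/2 ≤ ν) (hντ : ν < τ) (hτ : τ < 1) :
    ((a + b) / 2 - (a ^ ν * b ^ (1 - ν) + a ^ (1 - ν) * b ^ ν) / 2) / (ν * (1 - ν)) ≤
    ((a + b) / 2 - (a ^ τ * b ^ (1 - τ) + a ^ (1 - τ) * b ^ τ) / 2) / (τ * (1 - τ)) := by
  have hgap (t : ℝ) := exp_arith_mean_sub_heinz_eq (log a) (log b) t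
  simp only [exp_log ha, exp_log hb, exp_add, ← rpow_def_of_pos ha, ← rpow_def_of_pos hb] at hgap
  rw [hgap, hgap, div_le_div_iff₀ (by nlinarith) (by nlinarith)]
  have key := cosh_sub_cosh_mul_one_sub_sq_le ((log a - log b) / 2)
    (s := 2 * ν - 1) (r := 2 * τ - 1) (by nlinarith) (by nlinarith)
  nlinarith [exp_pos ((log a + log b) / 2)]
end

section
/- Let a, b > 0 and let τ, ν ∈ (0,1) with ν ≤ min{τ, 1-τ} or ν ≥ max{τ, 1-τ}. Then ((a∇b)² - H_τ(a,b)²)/(τ(1-τ)) ≤ ((a∇b)² - H_ν(a,b)²)/(ν(1-ν)). -/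
/-!
With `L = log (a / b)` one has `H_t(a, b) ^ 2 = a b (1 + cosh ((2t - 1) L)) / 2`, and `a∇b = H_1(a, b)`.
Since `4 t (1 - t) = 1 - (2t - 1) ^ 2`, each side becomes `2 a b` times a secant slope of
`v ↦ cosh √v` between `(2t - 1) ^ 2 L ^ 2` and `L ^ 2`. That function is convex on `[0, ∞)`, its
Taylor series `∑ vⁿ / (2n)!` having nonnegative coefficients, so the slope grows with the first
endpoint; and the hypothesis on `ν` and `τ` says precisely `(2τ - 1) ^ 2 ≤ (2ν - 1) ^ 2`.
-/

open Real Set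

theorem ConvexOn.of_hasSum {ι E : Type*} [AddCommGroup E] [Module ℝ E] {s : Set E}
    {f : ι → E → ℝ} {g : E → ℝ} (hs : Convex ℝ s) (hf : ∀ i, ConvexOn ℝ s (f i))
    (hg : ∀ x ∈ s, HasSum (fun i => f i x) (g x)) : ConvexOn ℝ s g :=
  ⟨hs, fun _ hx _ hy _ _ hp hq hpq =>
    hasSum_le (fun i => (hf i).2 hx hy hp hq hpq) (hg _ (hs hx hy hp hq hpq))
      (((hg _ hx).const_smul _).add ((hg _ hy).const_smul _))⟩

theorem convexOn_cosh_sqrt : ConvexOn ℝ (Ici 0) fun x => cosh √x := by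
  refine .of_hasSum (convex_Ici 0)
    (fun n => (convexOn_pow n).smul (c := ((2 * n).factorial : ℝ)⁻¹) (by positivity)) ?_
  intro x hx
  convert hasSum_cosh √x using 2 with n
  rw [pow_mul, sq_sqrt hx, smul_eq_mul, div_eq_inv_mul]

theorem cosh_sub_cosh_mul_div_le_of_sq_le (L : ℝ) {c c' : ℝ} (hcc' : c ^ 2 ≤ c' ^ 2)
    (hc' : c' ^ 2 < 1) :
    (cosh L - cosh (c * L)) / (1 - c ^ 2) ≤ (cosh L - cosh (c' * L)) / (1 - c' ^ 2) := by
  rcases eq_or_ne L 0 with rfl | hL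
  · simp
  have secant : ∀ {c : ℝ}, c ^ 2 < 1 → (cosh L - cosh (c * L)) / (1 - c ^ 2) =
      L ^ 2 * ((cosh √(c ^ 2 * L ^ 2) - cosh √(L ^ 2)) / (c ^ 2 * L ^ 2 - L ^ 2)) := by
    intro c hc
    have : 1 - c ^ 2 ≠ 0 := by linarith
    rw [show c ^ 2 * L ^ 2 - L ^ 2 = -((1 - c ^ 2) * L ^ 2) by ring, ← mul_pow, sqrt_sq_eq_abs,
      sqrt_sq_eq_abs, cosh_abs, cosh_abs]
    field_simp
    ring
  have hL2 : 0 < L ^ 2 := by positivity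
  rw [secant (hcc'.trans_lt hc'), secant hc']
  gcongr ?_ * ?_
  exact convexOn_cosh_sqrt.secant_mono (mem_Ici.2 (by positivity)) (mem_Ici.2 (by positivity))
    (mem_Ici.2 (by positivity)) (by nlinarith) (by nlinarith) (by gcongr)

theorem heinz_sq_eq {a b : ℝ} (ha : 0 < a) (hb : 0 < b) (t : ℝ) :
    ((a ^ t * b ^ (1 - t) + a ^ (1 - t) * b ^ t) / 2) ^ 2 =
      a * b * (1 + cosh ((2 * t - 1) * log (a / b))) / 2 := by
  set p := log a * t + log b * (1 - t)
  set q := log a * (1 - t) + log b * t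
  have hp : a ^ t * b ^ (1 - t) = exp p := by rw [rpow_def_of_pos ha, rpow_def_of_pos hb, ← exp_add]
  have hq : a ^ (1 - t) * b ^ t = exp q := by rw [rpow_def_of_pos ha, rpow_def_of_pos hb, ← exp_add]
  have hab : a * b = exp p * exp q := by
    rw [← exp_add, show p + q = log a + log b by ring, exp_add, exp_log ha, exp_log hb]
  have hL : (2 * t - 1) * log (a / b) = p - q := by rw [log_div ha.ne' hb.ne']; ring
  rw [hp, hq, hab, hL, cosh_eq, exp_sub, neg_sub, exp_sub]
  field_simp
  ring

theorem heinz_gap_div_eq {a b : ℝ} (ha : 0 < a) (hb : 0 < b) (t : ℝ) :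
    (((a + b) / 2) ^ 2 - ((a ^ t * b ^ (1 - t) + a ^ (1 - t) * b ^ t) / 2) ^ 2) / (t * (1 - t)) =
      2 * (a * b) * ((cosh (log (a / b)) - cosh ((2 * t - 1) * log (a / b))) /
        (1 - (2 * t - 1) ^ 2)) := by
  have hmean : ((a + b) / 2) ^ 2 = a * b * (1 + cosh (log (a / b))) / 2 := by
    simpa [show (2 : ℝ) - 1 = 1 by norm_num] using heinz_sq_eq ha hb 1
  rw [hmean, heinz_sq_eq ha hb t, show 1 - (2 * t - 1) ^ 2 = 4 * (t * (1 - t)) by ring]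
  generalize t * (1 - t) = s
  ring

theorem heinz_squared_comparison_general (a b ν τ : ℝ) (ha : 0 < a) (hb : 0 < b)
    (hν : ν ∈ Set.Ioo (0:ℝ) 1)
    (h : ν ≤ min τ (1 - τ) ∨ max τ (1 - τ) ≤ ν) :
    (((a + b) / 2) ^ 2 - ((a ^ τ * b ^ (1 - τ) + a ^ (1 - τ) * b ^ τ) / 2) ^ 2) / (τ * (1 - τ)) ≤
    (((a + b) / 2) ^ 2 - ((a ^ ν * b ^ (1 - ν) + a ^ (1 - ν) * b ^ ν) / 2) ^ 2) / (ν * (1 - ν)) := by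
  have hsq : (2 * τ - 1) ^ 2 ≤ (2 * ν - 1) ^ 2 := by
    rcases h with h | h
    · nlinarith [min_le_left τ (1 - τ), min_le_right τ (1 - τ)]
    · nlinarith [le_max_left τ (1 - τ), le_max_right τ (1 - τ)]
  have hν1 : (2 * ν - 1) ^ 2 < 1 := by nlinarith [hν.1, hν.2]
  rw [heinz_gap_div_eq ha hb, heinz_gap_div_eq ha hb]
  exact mul_le_mul_of_nonneg_left (cosh_sub_cosh_mul_div_le_of_sq_le _ hsq hν1) (by positivity)

theorem heinz_squared_comparison (a b ν τ : ℝ) (ha : 0 < a) (hb : 0 < b)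
    (hν : ν ∈ Set.Ioo (0:ℝ) 1) (hτ : τ ∈ Set.Ioo (0:ℝ) 1)
    (h : ν ≤ min τ (1 - τ) ∨ max τ (1 - τ) ≤ ν) :
    (((a + b) / 2) ^ 2 - ((a ^ τ * b ^ (1 - τ) + a ^ (1 - τ) * b ^ τ) / 2) ^ 2) / (τ * (1 - τ)) ≤
    (((a + b) / 2) ^ 2 - ((a ^ ν * b ^ (1 - ν) + a ^ (1 - ν) * b ^ ν) / 2) ^ 2) / (ν * (1 - ν)) :=
  heinz_squared_comparison_general a b ν τ ha hb hν h
end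

section
/- Let a, b > 0 and τ, ν ∈ (0,1) with min{τ,1-τ} ≤ ν ≤ max{τ,1-τ}. Then ((a∇b)² - H_τ(a,b)²)/(τ(1-τ)) ≥ ((a∇b)² - H_ν(a,b)²)/(ν(1-ν)). -/
open Real Set Nat

private lemma heinz_aux_summable (d w : ℝ) :
    Summable (fun n : ℕ => d ^ (2 * n) / ((2 * n)! : ℝ) * w ^ n) := by
  apply Summable.of_abs
  refine Summable.of_nonneg_of_le (fun n => abs_nonneg _) (fun n => ?_)
    (Real.summable_pow_div_factorial (d ^ 2 * |w|))
  have h1 : |d ^ (2 * n) / ((2 * n)! : ℝ) * w ^ n| = (d ^ 2 * |w|) ^ n / ((2 * n)! : ℝ) := by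
    rw [abs_mul, abs_div, abs_pow, abs_pow, Nat.abs_cast, mul_pow, ← sq_abs, ← pow_mul]
    ring
  rw [h1]
  gcongr
  omega

private lemma heinz_aux_convex (d : ℝ) :
    ConvexOn ℝ (Set.Ici (0:ℝ)) (fun w : ℝ => ∑' n : ℕ, d ^ (2 * n) / ((2 * n)! : ℝ) * w ^ n) := by
  refine ⟨convex_Ici 0, fun x hx y hy p q hp hq hpq => ?_⟩
  simp only [smul_eq_mul]
  calc ∑' n : ℕ, d ^ (2 * n) / ((2 * n)! : ℝ) * (p * x + q * y) ^ n
      ≤ ∑' n : ℕ, (p * (d ^ (2 * n) / ((2 * n)! : ℝ) * x ^ n)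
          + q * (d ^ (2 * n) / ((2 * n)! : ℝ) * y ^ n)) := by
        apply Summable.tsum_le_tsum _ (heinz_aux_summable d _)
          (((heinz_aux_summable d x).mul_left p).add ((heinz_aux_summable d y).mul_left q))
        intro n
        have hc : (0:ℝ) ≤ d ^ (2 * n) / ((2 * n)! : ℝ) := by
          rw [pow_mul]; positivity
        have hpow := (convexOn_pow (𝕜 := ℝ) n).2 hx hy hp hq hpq
        simp only [smul_eq_mul] at hpow
        nlinarith [mul_le_mul_of_nonneg_left hpow hc]
    _ = p * (∑' n : ℕ, d ^ (2 * n) / ((2 * n)! : ℝ) * x ^ n)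
          + q * (∑' n : ℕ, d ^ (2 * n) / ((2 * n)! : ℝ) * y ^ n) := by
        rw [Summable.tsum_add ((heinz_aux_summable d x).mul_left p) ((heinz_aux_summable d y).mul_left q),
          tsum_mul_left, tsum_mul_left]

private lemma heinz_aux_eval (d s : ℝ) :
    (∑' n : ℕ, d ^ (2 * n) / ((2 * n)! : ℝ) * (s ^ 2) ^ n) = Real.cosh (s * d) := by
  rw [Real.cosh_eq_tsum]
  congr 1
  ext n
  rw [← pow_mul, mul_pow]
  ring

private lemma heinz_key (d s t : ℝ) (hst : s ^ 2 ≤ t ^ 2) (ht1 : t ^ 2 < 1) :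
    (Real.cosh d - Real.cosh (s * d)) / (1 - s ^ 2) ≤
      (Real.cosh d - Real.cosh (t * d)) / (1 - t ^ 2) := by
  have hs1 : s ^ 2 < 1 := lt_of_le_of_lt hst ht1
  have H := (heinz_aux_convex d).secant_mono (a := 1) (x := s ^ 2) (y := t ^ 2)
    (Set.mem_Ici.mpr zero_le_one) (Set.mem_Ici.mpr (sq_nonneg s)) (Set.mem_Ici.mpr (sq_nonneg t)) (ne_of_lt hs1) (ne_of_lt ht1) hst
  rw [heinz_aux_eval, heinz_aux_eval] at H
  have h1 : (∑' n : ℕ, d ^ (2 * n) / ((2 * n)! : ℝ) * (1:ℝ) ^ n) = Real.cosh d := by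
    have := heinz_aux_eval d 1
    simpa using this
  rw [h1] at H
  have e : ∀ A B C : ℝ, (A - B) / (C - 1) = (B - A) / (1 - C) := by
    intro A B C
    rw [← neg_div_neg_eq]
    ring_nf
  rw [e, e] at H
  exact H

theorem heinz_squared_comparison_reverse (a b ν τ : ℝ) (ha : 0 < a) (hb : 0 < b)
    (hν : ν ∈ Set.Ioo (0:ℝ) 1) (hτ : τ ∈ Set.Ioo (0:ℝ) 1)
    (h1 : min τ (1 - τ) ≤ ν) (h2 : ν ≤ max τ (1 - τ)) :
    (((a + b) / 2) ^ 2 - ((a ^ ν * b ^ (1 - ν) + a ^ (1 - ν) * b ^ ν) / 2) ^ 2) / (ν * (1 - ν)) ≤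
    (((a + b) / 2) ^ 2 - ((a ^ τ * b ^ (1 - τ) + a ^ (1 - τ) * b ^ τ) / 2) ^ 2) / (τ * (1 - τ)) := by
  obtain ⟨hν0, hν1⟩ := hν
  obtain ⟨hτ0, hτ1⟩ := hτ
  set d : ℝ := Real.log a - Real.log b with hd
  -- the key identity
  have ident : ∀ t : ℝ, ((a + b) / 2) ^ 2 - ((a ^ t * b ^ (1 - t) + a ^ (1 - t) * b ^ t) / 2) ^ 2
      = a * b * (Real.cosh d - Real.cosh ((2 * t - 1) * d)) / 2 := by
    intro t
    have hP : a ^ t * b ^ (1 - t) = Real.exp (t * Real.log a + (1 - t) * Real.log b) := by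
      rw [Real.rpow_def_of_pos ha, Real.rpow_def_of_pos hb, ← Real.exp_add]
      ring_nf
    have hQ : a ^ (1 - t) * b ^ t = Real.exp ((1 - t) * Real.log a + t * Real.log b) := by
      rw [Real.rpow_def_of_pos ha, Real.rpow_def_of_pos hb, ← Real.exp_add]
      ring_nf
    have hab : a * b = Real.exp (Real.log a + Real.log b) := by
      rw [Real.exp_add, Real.exp_log ha, Real.exp_log hb]
    have ha2 : a ^ 2 = a * b * Real.exp d := by
      rw [hab, ← Real.exp_add, hd]
      rw [show Real.log a + Real.log b + (Real.log a - Real.log b) = Real.log a + Real.log a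
        by ring, Real.exp_add, Real.exp_log ha]
      ring
    have hb2 : b ^ 2 = a * b * Real.exp (-d) := by
      rw [hab, ← Real.exp_add, hd]
      rw [show Real.log a + Real.log b + -(Real.log a - Real.log b) = Real.log b + Real.log b
        by ring, Real.exp_add, Real.exp_log hb]
      ring
    have hP2 : (a ^ t * b ^ (1 - t)) ^ 2 = a * b * Real.exp ((2 * t - 1) * d) := by
      rw [hP, hab, ← Real.exp_add, ← Real.exp_nat_mul]
      · congr 1
        rw [hd]; push_cast; ring
    have hQ2 : (a ^ (1 - t) * b ^ t) ^ 2 = a * b * Real.exp (-((2 * t - 1) * d)) := by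
      rw [hQ, hab, ← Real.exp_add, ← Real.exp_nat_mul]
      · congr 1
        rw [hd]; push_cast; ring
    have hPQ : (a ^ t * b ^ (1 - t)) * (a ^ (1 - t) * b ^ t) = a * b := by
      rw [hP, hQ, ← Real.exp_add, hab]
      congr 1
      ring
    rw [Real.cosh_eq, Real.cosh_eq]
    nlinarith [ha2, hb2, hP2, hQ2, hPQ]
  have hs2 : (2 * ν - 1) ^ 2 ≤ (2 * τ - 1) ^ 2 := by
    rcases le_total τ (1 - τ) with h | h
    · rw [min_eq_left h] at h1
      rw [max_eq_right h] at h2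
      nlinarith [mul_nonneg (sub_nonneg.2 h1) (sub_nonneg.2 h2)]
    · rw [min_eq_right h] at h1
      rw [max_eq_left h] at h2
      nlinarith [mul_nonneg (sub_nonneg.2 h1) (sub_nonneg.2 h2)]
  have ht1 : (2 * τ - 1) ^ 2 < 1 := by nlinarith
  have hν' : (0:ℝ) < 1 - (2 * ν - 1) ^ 2 := by nlinarith
  have hτ' : (0:ℝ) < 1 - (2 * τ - 1) ^ 2 := by nlinarith
  have key := heinz_key d (2 * ν - 1) (2 * τ - 1) hs2 ht1
  rw [ident ν, ident τ]
  have eν : ν * (1 - ν) = (1 - (2 * ν - 1) ^ 2) / 4 := by ring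
  have eτ : τ * (1 - τ) = (1 - (2 * τ - 1) ^ 2) / 4 := by ring
  rw [eν, eτ]
  have r1 : a * b * (Real.cosh d - Real.cosh ((2 * ν - 1) * d)) / 2 / ((1 - (2 * ν - 1) ^ 2) / 4)
      = 2 * (a * b) * ((Real.cosh d - Real.cosh ((2 * ν - 1) * d)) / (1 - (2 * ν - 1) ^ 2)) := by
    field_simp
    ring
  have r2 : a * b * (Real.cosh d - Real.cosh ((2 * τ - 1) * d)) / 2 / ((1 - (2 * τ - 1) ^ 2) / 4)
      = 2 * (a * b) * ((Real.cosh d - Real.cosh ((2 * τ - 1) * d)) / (1 - (2 * τ - 1) ^ 2)) := by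
    field_simp
    ring
  rw [r1, r2]
  apply mul_le_mul_of_nonneg_left key
  positivity
end

section
/- For all a, b > 0 and 0 ≤ t ≤ 1, one has (a^t b^{1-t} + a^{1-t} b^t) + t(1-t)(b-a) log(b/a) ≥ a + b. -/
/-!
Write `a = exp (m - x)` and `b = exp (m + x)`. Then the defect `a + b - (a^t b^(1-t) + a^(1-t) b^t)`
is `4 exp m sinh (t x) sinh ((1 - t) x)`, while the logarithmic term is `4 exp m t (1 - t) x sinh x`.
Expanding `sinh x = sinh (t x + (1 - t) x)` reduces the comparison of the two to `tanh y ≤ y`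
for `y ≥ 0`.
-/

open Real

theorem Real.monotone_mul_cosh_sub_sinh : Monotone fun x : ℝ => x * cosh x - sinh x := by
  refine monotone_of_deriv_nonneg (by fun_prop) fun x => ?_
  have hd : HasDerivAt (fun x : ℝ => x * cosh x - sinh x) (x * sinh x) x := by
    simpa using ((hasDerivAt_id' x).fun_mul (hasDerivAt_cosh x)).fun_sub (hasDerivAt_sinh x)
  rw [hd.deriv]
  rcases le_total 0 x with hx | hx
  · exact mul_nonneg hx (sinh_nonneg_iff.2 hx)
  · exact mul_nonneg_of_nonpos_of_nonpos hx (sinh_nonpos_iff.2 hx)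

theorem Real.sinh_le_mul_cosh {x : ℝ} (hx : 0 ≤ x) : sinh x ≤ x * cosh x := by
  simpa using monotone_mul_cosh_sub_sinh hx

theorem Real.sinh_mul_mul_sinh_one_sub_mul_le_of_nonneg {t x : ℝ} (ht0 : 0 ≤ t) (ht1 : t ≤ 1)
    (hx : 0 ≤ x) : sinh (t * x) * sinh ((1 - t) * x) ≤ t * (1 - t) * x * sinh x := by
  have hu : 0 ≤ t * x := mul_nonneg ht0 hx
  have hv : 0 ≤ (1 - t) * x := mul_nonneg (sub_nonneg.2 ht1) hx
  have hsplit :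
      sinh x = sinh (t * x) * cosh ((1 - t) * x) + cosh (t * x) * sinh ((1 - t) * x) := by
    rw [← sinh_add]; ring_nf
  rw [hsplit]
  nlinarith [mul_le_mul_of_nonneg_left (sinh_le_mul_cosh hv)
      (mul_nonneg ht0 (sinh_nonneg_iff.2 hu)),
    mul_le_mul_of_nonneg_left (sinh_le_mul_cosh hu)
      (mul_nonneg (sub_nonneg.2 ht1) (sinh_nonneg_iff.2 hv))]

theorem Real.sinh_mul_mul_sinh_one_sub_mul_le {t : ℝ} (ht0 : 0 ≤ t) (ht1 : t ≤ 1) (x : ℝ) :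
    sinh (t * x) * sinh ((1 - t) * x) ≤ t * (1 - t) * x * sinh x := by
  rcases le_total 0 x with hx | hx
  · exact sinh_mul_mul_sinh_one_sub_mul_le_of_nonneg ht0 ht1 hx
  · simpa [mul_neg] using sinh_mul_mul_sinh_one_sub_mul_le_of_nonneg ht0 ht1 (neg_nonneg.2 hx)

theorem Real.cosh_sub_cosh_one_sub_two_mul (t x : ℝ) :
    cosh x - cosh ((1 - 2 * t) * x) = 2 * sinh (t * x) * sinh ((1 - t) * x) := by
  have hadd : x = (1 - t) * x + t * x := by ring
  have hsub : (1 - 2 * t) * x = (1 - t) * x - t * x := by ring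
  rw [hsub, cosh_sub]
  nth_rw 1 [hadd]
  rw [cosh_add]
  ring

theorem Real.exp_add_add_exp_sub (m y : ℝ) : exp (m + y) + exp (m - y) = 2 * exp m * cosh y := by
  rw [cosh_eq, sub_eq_add_neg m y, exp_add, exp_add]
  ring

theorem Real.exp_add_sub_exp_sub (m y : ℝ) : exp (m + y) - exp (m - y) = 2 * exp m * sinh y := by
  rw [sinh_eq, sub_eq_add_neg m y, exp_add, exp_add]
  ring

theorem Real.exp_add_exp_le_reverse_heinz {t : ℝ} (ht0 : 0 ≤ t) (ht1 : t ≤ 1) (p q : ℝ) :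
    exp p + exp q ≤ exp (p * t + q * (1 - t)) + exp (p * (1 - t) + q * t)
      + t * (1 - t) * (exp q - exp p) * (q - p) := by
  set m := (p + q) / 2
  set x := (q - p) / 2
  have hp : p = m - x := by ring
  have hq : q = m + x := by ring
  have hpq : p * t + q * (1 - t) = m + (1 - 2 * t) * x := by ring
  have hqp : p * (1 - t) + q * t = m - (1 - 2 * t) * x := by ring
  have hcosh := exp_add_add_exp_sub m x
  have hcosh' := exp_add_add_exp_sub m ((1 - 2 * t) * x)
  have hsinh := exp_add_sub_exp_sub m x
  have hdiff := cosh_sub_cosh_one_sub_two_mul t x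
  have key := mul_le_mul_of_nonneg_left (sinh_mul_mul_sinh_one_sub_mul_le ht0 ht1 x)
    (exp_pos m).le
  rw [hpq, hqp, hp, hq, show m + x - (m - x) = 2 * x by ring, hsinh]
  linear_combination 4 * key + hcosh - hcosh' + 2 * exp m * hdiff

theorem log_reverse_heinz (a b t : ℝ) (ha : 0 < a) (hb : 0 < b)
    (ht0 : 0 ≤ t) (ht1 : t ≤ 1) :
    a + b ≤ (a ^ t * b ^ (1 - t) + a ^ (1 - t) * b ^ t)
      + t * (1 - t) * (b - a) * Real.log (b / a) := by
  have h := exp_add_exp_le_reverse_heinz ht0 ht1 (log a) (log b)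
  rwa [exp_add, exp_add, ← rpow_def_of_pos ha, ← rpow_def_of_pos ha, ← rpow_def_of_pos hb,
    ← rpow_def_of_pos hb, exp_log ha, exp_log hb, ← log_div hb.ne' ha.ne'] at h
end

section
/- For any c > 0, the function f(t) = ((1+c)/(c^t + c^{1-t}))^{1/(t(1-t))} is increasing on (0, 1/2) and decreasing on (1/2, 1). -/
/-!
Put `a = log c / 2`. Then `c ^ t + c ^ (1 - t) = 2 e^a cosh ((2t - 1) a)`, so the base is
`cosh a / cosh ((2t - 1) a)`, and as `t (1 - t) = (1 - u) / 4` with `u = (2t - 1)²`, the logarithm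
of `f t` is `4` times the slope of the chord of `φ u = log (cosh √(a² u))` between `u` and `1`.
The function `φ` is concave on `[0, ∞)`, since its derivative is `a² tanh y / (2y)` at
`y = √(a² u)` and `tanh y / y` decreases. Hence the chord slope decreases in `u`, while `u`
decreases on `(0, 1/2)` and increases on `(1/2, 1)`.
-/

open Real Set

lemma hasDerivAt_sinh_div_mul_cosh {y : ℝ} (hy : y ≠ 0) :
    HasDerivAt (fun y => sinh y / (y * cosh y)) ((y - sinh y * cosh y) / (y * cosh y) ^ 2) y := by
  refine ((hasDerivAt_sinh y).div ((hasDerivAt_id' y).mul (hasDerivAt_cosh y))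
    (mul_ne_zero hy (cosh_pos y).ne')).congr_deriv ?_
  simp only [Pi.mul_apply, one_mul]
  linear_combination y * cosh_sq_sub_sinh_sq y / (y * cosh y) ^ 2

lemma antitoneOn_sinh_div_mul_cosh : AntitoneOn (fun y => sinh y / (y * cosh y)) (Ioi 0) := by
  refine antitoneOn_of_hasDerivWithinAt_nonpos (convex_Ioi 0)
    (fun y hy => (hasDerivAt_sinh_div_mul_cosh (ne_of_gt hy)).continuousAt.continuousWithinAt)
    (fun y hy => (hasDerivAt_sinh_div_mul_cosh (ne_of_gt ?_)).hasDerivWithinAt) ?_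
  · simpa using hy
  · intro y hy
    rw [interior_Ioi] at hy
    have : y < sinh y * cosh y := by
      nlinarith [self_lt_sinh_iff.2 hy, one_le_cosh y, sinh_pos_iff.2 hy]
    exact div_nonpos_of_nonpos_of_nonneg (by linarith) (sq_nonneg _)

lemma hasDerivAt_log_cosh_sqrt {r : ℝ} (hr : 0 < r) :
    HasDerivAt (fun r => log (cosh √r)) (sinh √r / (√r * cosh √r) / 2) r := by
  convert ((hasDerivAt_sqrt hr.ne').cosh).log (cosh_pos _).ne' using 1
  have := (sqrt_pos.2 hr).ne'
  field_simp

lemma concaveOn_log_cosh_sqrt : ConcaveOn ℝ (Ici 0) (fun r => log (cosh √r)) := by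
  refine AntitoneOn.concaveOn_of_deriv (convex_Ici 0)
    ((continuous_cosh.comp continuous_sqrt).log fun r => (cosh_pos _).ne').continuousOn ?_ ?_ <;>
    rw [interior_Ici]
  · exact fun r hr => (hasDerivAt_log_cosh_sqrt hr).differentiableAt.differentiableWithinAt
  · intro r hr s hs hrs
    rw [(hasDerivAt_log_cosh_sqrt hr).deriv, (hasDerivAt_log_cosh_sqrt hs).deriv]
    exact div_le_div_of_nonneg_right (antitoneOn_sinh_div_mul_cosh (sqrt_pos.2 hr)
      (sqrt_pos.2 hs) (sqrt_le_sqrt hrs)) zero_le_two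

lemma concaveOn_log_cosh_sqrt_const_mul {k : ℝ} (hk : 0 ≤ k) :
    ConcaveOn ℝ (Ici 0) (fun r => log (cosh √(k * r))) :=
  (concaveOn_log_cosh_sqrt.comp_linearMap (LinearMap.mul ℝ ℝ k)).subset
    (fun _ hr => mul_nonneg hk hr) (convex_Ici 0)

lemma rpow_add_rpow_one_sub {c : ℝ} (hc : 0 < c) (t : ℝ) :
    c ^ t + c ^ (1 - t) = 2 * exp (log c / 2) * cosh ((2 * t - 1) * (log c / 2)) := by
  calc c ^ t + c ^ (1 - t)
      = exp (log c / 2 + (2 * t - 1) * (log c / 2)) +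
          exp (log c / 2 - (2 * t - 1) * (log c / 2)) := by
        rw [rpow_def_of_pos hc, rpow_def_of_pos hc]; ring_nf
    _ = _ := by rw [exp_add, exp_sub, cosh_eq, exp_neg]; ring

lemma heinz_eq_exp_slope {c : ℝ} (hc : 0 < c) (t : ℝ) :
    ((1 + c) / (c ^ t + c ^ (1 - t))) ^ (1 / (t * (1 - t))) =
      exp (4 * slope (fun u => log (cosh √((log c / 2) ^ 2 * u))) 1 ((2 * t - 1) ^ 2)) := by
  have hcosh (x : ℝ) : cosh √((log c / 2) ^ 2 * x ^ 2) = cosh (x * (log c / 2)) := by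
    rw [← mul_pow, sqrt_sq_eq_abs, cosh_abs, mul_comm]
  have h1c : 1 + c = 2 * exp (log c / 2) * cosh (log c / 2) := by
    simpa using rpow_add_rpow_one_sub hc 0
  rw [h1c, rpow_add_rpow_one_sub hc, mul_div_mul_left _ _ (by positivity),
    rpow_def_of_pos (by positivity), log_div (cosh_pos _).ne' (cosh_pos _).ne', slope_def_field,
    hcosh, mul_one, sqrt_sq_eq_abs, cosh_abs]
  have hden : (2 * t - 1) ^ 2 - 1 = -(4 * (t * (1 - t))) := by ring
  rw [hden]
  generalize t * (1 - t) = p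
  congr 1
  ring

lemma monotoneOn_antitoneOn_comp_sq_two_mul_sub_one {g : ℝ → ℝ} (hg : AntitoneOn g (Ico 0 1)) :
    MonotoneOn (fun t => g ((2 * t - 1) ^ 2)) (Ioo 0 (1 / 2)) ∧
      AntitoneOn (fun t => g ((2 * t - 1) ^ 2)) (Ioo (1 / 2) 1) := by
  constructor
  · intro s hs t ht hst
    exact hg ⟨sq_nonneg _, by nlinarith [ht.1, ht.2]⟩ ⟨sq_nonneg _, by nlinarith [hs.1, hs.2]⟩
      (by nlinarith [ht.2])
  · intro s hs t ht hst
    exact hg ⟨sq_nonneg _, by nlinarith [hs.1, hs.2]⟩ ⟨sq_nonneg _, by nlinarith [ht.1, ht.2]⟩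
      (by nlinarith [hs.1])

theorem heinz_multiplicative_monotone (c : ℝ) (hc : 0 < c) :
    MonotoneOn (fun t : ℝ => ((1 + c) / (c ^ t + c ^ (1 - t))) ^ (1 / (t * (1 - t))))
      (Set.Ioo (0:ℝ) (1/2)) ∧
    AntitoneOn (fun t : ℝ => ((1 + c) / (c ^ t + c ^ (1 - t))) ^ (1 / (t * (1 - t))))
      (Set.Ioo ((1:ℝ)/2) 1) := by
  have hslope := (concaveOn_log_cosh_sqrt_const_mul (sq_nonneg (log c / 2))).antitoneOn_slope_lt
    (mem_Ici.2 zero_le_one)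
  simp_rw [heinz_eq_exp_slope hc]
  exact monotoneOn_antitoneOn_comp_sq_two_mul_sub_one
    ((exp_monotone.comp (monotone_mul_left_of_nonneg zero_le_four)).comp_antitoneOn hslope)
end

section
/- For all a, b > 0 and 0 ≤ t ≤ 1, one has a + b ≤ ((a+b)/(2√(ab)))^{4t(1-t)} · (a^t b^{1-t} + a^{1-t} b^t). -/
/-!
With `a = e^(m+u)`, `b = e^(m-u)` and `r = 2t - 1` one has `a + b = 2√(ab) cosh u`,
`a^t b^(1-t) + a^(1-t) b^t = 2√(ab) cosh (r u)` and `4t(1-t) = 1 - r²`, so the inequality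
reduces to `(cosh u)^(r²) ≤ cosh (r u)` for `|r| ≤ 1`. After taking logarithms, the function
`x ↦ log cosh (r x) - r² log cosh x` vanishes at `0` and has derivative
`r (tanh (r x) - r tanh x) ≥ 0` on `[0, ∞)`, by concavity of `tanh` there.
-/

open Real Set

lemma monotoneOn_Ici_of_hasDerivAt_nonneg {f f' : ℝ → ℝ} {a : ℝ}
    (hf : ∀ x, HasDerivAt f (f' x) x) (hf' : ∀ x, a < x → 0 ≤ f' x) :
    MonotoneOn f (Ici a) :=
  monotoneOn_of_hasDerivWithinAt_nonneg (convex_Ici a)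
    (fun x _ ↦ (hf x).continuousAt.continuousWithinAt)
    (fun x _ ↦ (hf x).hasDerivWithinAt) (by simpa using hf')

namespace Real

theorem mul_tanh_le_tanh_mul {r s : ℝ} (hr0 : 0 ≤ r) (hr1 : r ≤ 1) (hs : 0 ≤ s) :
    r * tanh s ≤ tanh (r * s) := by
  have hderiv (x : ℝ) : HasDerivAt (fun x ↦ sinh (r * x) * cosh x - r * sinh x * cosh (r * x))
      ((1 - r ^ 2) * sinh (r * x) * sinh x) x := by
    have hrx : HasDerivAt (r * ·) r x := by simpa using (hasDerivAt_id x).const_mul r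
    exact ((((hasDerivAt_sinh _).comp x hrx).mul (hasDerivAt_cosh x)).sub
      (((hasDerivAt_sinh x).const_mul r).mul ((hasDerivAt_cosh _).comp x hrx))).congr_deriv
      (by simp only [Function.comp_apply]; ring)
  have hmono := monotoneOn_Ici_of_hasDerivAt_nonneg hderiv fun x hx ↦ by
    have hsinh_rx : 0 ≤ sinh (r * x) := sinh_nonneg_iff.2 (mul_nonneg hr0 hx.le)
    have hsinh_x : 0 ≤ sinh x := sinh_nonneg_iff.2 hx.le
    have hr2 : 0 ≤ 1 - r ^ 2 := by nlinarith
    exact mul_nonneg (mul_nonneg hr2 hsinh_rx) hsinh_x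
  have key := hmono self_mem_Ici hs hs
  simp only [mul_zero, sinh_zero, zero_mul, sub_zero] at key
  rw [tanh_eq_sinh_div_cosh, tanh_eq_sinh_div_cosh, mul_div_assoc',
    div_le_div_iff₀ (cosh_pos s) (cosh_pos _)]
  linarith

theorem sq_mul_log_cosh_le_log_cosh_mul {r s : ℝ} (hr0 : 0 ≤ r) (hr1 : r ≤ 1) (hs : 0 ≤ s) :
    r ^ 2 * log (cosh s) ≤ log (cosh (r * s)) := by
  have hlogcosh (x : ℝ) : HasDerivAt (fun x ↦ log (cosh x)) (tanh x) x := by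
    simpa [tanh_eq_sinh_div_cosh] using (hasDerivAt_cosh x).log (cosh_pos x).ne'
  have hderiv (x : ℝ) : HasDerivAt (fun x ↦ log (cosh (r * x)) - r ^ 2 * log (cosh x))
      (r * (tanh (r * x) - r * tanh x)) x := by
    have hrx : HasDerivAt (r * ·) r x := by simpa using (hasDerivAt_id x).const_mul r
    exact (((hlogcosh _).comp x hrx).sub ((hlogcosh x).const_mul (r ^ 2))).congr_deriv
      (by ring)
  have hmono := monotoneOn_Ici_of_hasDerivAt_nonneg hderiv fun x hx ↦
    mul_nonneg hr0 (sub_nonneg.2 (mul_tanh_le_tanh_mul hr0 hr1 hx.le))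
  have key := hmono self_mem_Ici hs hs
  simp only [mul_zero, cosh_zero, log_one, sub_zero] at key
  linarith

theorem cosh_rpow_sq_le_cosh_mul {r : ℝ} (hr : |r| ≤ 1) (u : ℝ) :
    cosh u ^ (r ^ 2) ≤ cosh (r * u) := by
  rw [← cosh_abs u, ← cosh_abs (r * u), abs_mul, ← sq_abs r,
    rpow_def_of_pos (cosh_pos _), ← exp_log (cosh_pos (|r| * |u|)), exp_le_exp, mul_comm]
  exact sq_mul_log_cosh_le_log_cosh_mul (abs_nonneg r) hr (abs_nonneg u)

theorem cosh_le_cosh_rpow_mul_cosh_mul {r : ℝ} (hr : |r| ≤ 1) (u : ℝ) :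
    cosh u ≤ cosh u ^ (1 - r ^ 2) * cosh (r * u) := by
  calc cosh u = cosh u ^ (1 - r ^ 2) * cosh u ^ (r ^ 2) := by
        rw [← rpow_add (cosh_pos u), sub_add_cancel, rpow_one]
    _ ≤ cosh u ^ (1 - r ^ 2) * cosh (r * u) := by
        gcongr
        exact cosh_rpow_sq_le_cosh_mul hr u

end Real

theorem rpow_mul_rpow_add_rpow_mul_rpow_eq {a b : ℝ} (ha : 0 < a) (hb : 0 < b) (t : ℝ) :
    a ^ t * b ^ (1 - t) + a ^ (1 - t) * b ^ t
      = 2 * √(a * b) * cosh ((2 * t - 1) * ((log a - log b) / 2)) := by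
  rw [sqrt_eq_rpow, rpow_def_of_pos (mul_pos ha hb), log_mul ha.ne' hb.ne', rpow_def_of_pos ha,
    rpow_def_of_pos ha, rpow_def_of_pos hb, rpow_def_of_pos hb, cosh_eq, ← exp_add, ← exp_add]
  field_simp
  rw [mul_add, ← exp_add, ← exp_add]
  congr 2 <;> ring

theorem multiplicative_reverse_heinz (a b t : ℝ) (ha : 0 < a) (hb : 0 < b)
    (ht0 : 0 ≤ t) (ht1 : t ≤ 1) :
    a + b ≤ ((a + b) / (2 * Real.sqrt (a * b))) ^ (4 * t * (1 - t))
      * (a ^ t * b ^ (1 - t) + a ^ (1 - t) * b ^ t) := by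
  have hab : a + b = 2 * √(a * b) * cosh ((log a - log b) / 2) := by
    have := rpow_mul_rpow_add_rpow_mul_rpow_eq ha hb 1
    norm_num at this
    exact this
  have hg : 0 < 2 * √(a * b) := by positivity
  have hr : |2 * t - 1| ≤ 1 := abs_le.2 ⟨by linarith, by linarith⟩
  rw [rpow_mul_rpow_add_rpow_mul_rpow_eq ha hb t, hab, mul_div_cancel_left₀ _ hg.ne',
    show 4 * t * (1 - t) = 1 - (2 * t - 1) ^ 2 by ring, mul_left_comm]
  exact mul_le_mul_of_nonneg_left (cosh_le_cosh_rpow_mul_cosh_mul hr _) hg.le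
end

section
/- Fix b > 0 and τ ∈ (0, 1/2]. Define H(t) = (b^{1-t} + b^t)/2 and F_τ(t) = (1+b)/2 - ((1+b)/2 - H(τ)) · t(1-t)/(τ(1-τ)). Then H(t) ≤ F_τ(t) for t ∈ [0, τ] ∪ [1-τ, 1], and H(t) ≥ F_τ(t) for t ∈ [τ, 1-τ]. -/
open scoped Nat

private lemma poly_step (n : ℕ) {x y z : ℝ} (hy : 0 ≤ y) (hyz : y ≤ z) (hzx : z ≤ x) :
    (x ^ n - y ^ n) * (x - z) ≤ (x ^ n - z ^ n) * (x - y) := by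
  have hx : 0 ≤ x := le_trans (le_trans hy hyz) hzx
  rw [← geom_sum₂_mul x y n, ← geom_sum₂_mul x z n]
  have hS : (∑ i ∈ Finset.range n, x ^ i * y ^ (n - 1 - i)) ≤
      ∑ i ∈ Finset.range n, x ^ i * z ^ (n - 1 - i) :=
    Finset.sum_le_sum fun i _ =>
      mul_le_mul_of_nonneg_left (pow_le_pow_left₀ hy hyz _) (pow_nonneg hx i)
  have h1 : 0 ≤ x - y := by linarith
  have h2 : 0 ≤ x - z := by linarith
  nlinarith [mul_nonneg (mul_nonneg (sub_nonneg.2 hS) h1) h2]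

private lemma coshKey (a : ℝ) {s r : ℝ} (hs : 0 ≤ s) (hsr : s ≤ r) (hr : r ≤ 1/2) :
    (Real.cosh (1/2 * a) - Real.cosh (s * a)) * (1/4 - r ^ 2) ≤
      (Real.cosh (1/2 * a) - Real.cosh (r * a)) * (1/4 - s ^ 2) := by
  have h1 := ((Real.hasSum_cosh (1/2 * a)).sub (Real.hasSum_cosh (s * a))).mul_right
    (1/4 - r ^ 2)
  have h2 := ((Real.hasSum_cosh (1/2 * a)).sub (Real.hasSum_cosh (r * a))).mul_right
    (1/4 - s ^ 2)
  refine hasSum_le (fun n => ?_) h1 h2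
  have e1 : ∀ x : ℝ, (x * a) ^ (2 * n) = (x ^ 2) ^ n * (a ^ 2) ^ n := by
    intro x
    rw [pow_mul, mul_pow, mul_pow]
  have hc : (0:ℝ) ≤ (a ^ 2) ^ n / (2 * n)! := by positivity
  have hy : (0:ℝ) ≤ s ^ 2 := sq_nonneg s
  have hyz : s ^ 2 ≤ r ^ 2 := pow_le_pow_left₀ hs hsr 2
  have hzx : r ^ 2 ≤ (1/4 : ℝ) := by nlinarith
  have hp := mul_le_mul_of_nonneg_left (poly_step n hy hyz hzx) hc
  simp only [e1]
  have h14 : ((1:ℝ)/2) ^ 2 = 1/4 := by norm_num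
  rw [h14]
  have egoal1 : (((1:ℝ)/4) ^ n * (a ^ 2) ^ n / (2 * n)! - (s ^ 2) ^ n * (a ^ 2) ^ n / (2 * n)!)
      * (1/4 - r ^ 2)
      = (a ^ 2) ^ n / (2 * n)! * ((((1:ℝ)/4) ^ n - (s ^ 2) ^ n) * (1/4 - r ^ 2)) := by ring
  have egoal2 : (((1:ℝ)/4) ^ n * (a ^ 2) ^ n / (2 * n)! - (r ^ 2) ^ n * (a ^ 2) ^ n / (2 * n)!)
      * (1/4 - s ^ 2)
      = (a ^ 2) ^ n / (2 * n)! * ((((1:ℝ)/4) ^ n - (r ^ 2) ^ n) * (1/4 - s ^ 2)) := by ring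
  rw [egoal1, egoal2]
  exact hp

private lemma frac_cmp (E C0 Cs Cu D q : ℝ) (hE : 0 ≤ E) (hD : 0 < D)
    (hkey : (C0 - Cu) * q ≤ (C0 - Cs) * D) :
    2 * E * Cs / 2 ≤ 2 * E * C0 / 2 - (2 * E * C0 / 2 - 2 * E * Cu / 2) * q / D := by
  rw [← sub_nonneg]
  have hD' : D ≠ 0 := ne_of_gt hD
  have heq : 2 * E * C0 / 2 - (2 * E * C0 / 2 - 2 * E * Cu / 2) * q / D - 2 * E * Cs / 2
      = E * ((C0 - Cs) * D - (C0 - Cu) * q) / D := by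
    field_simp
    ring
  rw [heq]
  exact div_nonneg (mul_nonneg hE (sub_nonneg.2 hkey)) hD.le

private lemma frac_cmp' (E C0 Cs Cu D q : ℝ) (hE : 0 ≤ E) (hD : 0 < D)
    (hkey : (C0 - Cs) * D ≤ (C0 - Cu) * q) :
    2 * E * C0 / 2 - (2 * E * C0 / 2 - 2 * E * Cu / 2) * q / D ≤ 2 * E * Cs / 2 := by
  rw [← sub_nonneg]
  have hD' : D ≠ 0 := ne_of_gt hD
  have heq : 2 * E * Cs / 2 - (2 * E * C0 / 2 - (2 * E * C0 / 2 - 2 * E * Cu / 2) * q / D)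
      = E * ((C0 - Cu) * q - (C0 - Cs) * D) / D := by
    field_simp
    ring
  rw [heq]
  exact div_nonneg (mul_nonneg hE (sub_nonneg.2 hkey)) hD.le

theorem quadratic_interpolation_comparison (b τ : ℝ) (hb : 0 < b)
    (hτ0 : 0 < τ) (hτ : τ ≤ 1/2) :
    (∀ t ∈ Set.Icc (0:ℝ) τ ∪ Set.Icc (1 - τ) 1,
      (b ^ (1 - t) + b ^ t) / 2 ≤
        (1 + b) / 2 - ((1 + b) / 2 - (b ^ (1 - τ) + b ^ τ) / 2) * (t * (1 - t)) / (τ * (1 - τ)))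
    ∧ (∀ t ∈ Set.Icc τ (1 - τ),
      (1 + b) / 2 - ((1 + b) / 2 - (b ^ (1 - τ) + b ^ τ) / 2) * (t * (1 - t)) / (τ * (1 - τ))
        ≤ (b ^ (1 - t) + b ^ t) / 2) := by
  set a := Real.log b with ha
  have hba : ∀ x : ℝ, b ^ x = Real.exp (x * a) := by
    intro x
    rw [Real.rpow_def_of_pos hb, mul_comm]
  have hH : ∀ t : ℝ, b ^ (1 - t) + b ^ t = 2 * Real.exp (a/2) * Real.cosh ((t - 1/2) * a) := by
    intro t
    rw [hba, hba, Real.cosh_eq]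
    have e1 : (1 - t) * a = a/2 + -((t - 1/2) * a) := by ring
    have e2 : t * a = a/2 + (t - 1/2) * a := by ring
    rw [e1, e2, Real.exp_add, Real.exp_add]
    ring
  have h1b : 1 + b = 2 * Real.exp (a/2) * Real.cosh (1/2 * a) := by
    have hb' : b = Real.exp a := (Real.exp_log hb).symm
    rw [Real.cosh_eq, hb']
    have e1 : Real.exp (a/2) * Real.exp (1/2 * a) = Real.exp a := by
      rw [← Real.exp_add]; ring_nf
    have e2 : Real.exp (a/2) * Real.exp (-(1/2 * a)) = 1 := by
      rw [← Real.exp_add]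
      have : a/2 + -(1/2 * a) = 0 := by ring
      rw [this, Real.exp_zero]
    nlinarith [e1, e2]
  have hE : (0:ℝ) ≤ Real.exp (a/2) := (Real.exp_pos _).le
  have hD : (0:ℝ) < τ * (1 - τ) := by nlinarith
  have hCτ : Real.cosh ((τ - 1/2) * a) = Real.cosh ((1/2 - τ) * a) := by
    rw [show (τ - 1/2) * a = -((1/2 - τ) * a) by ring, Real.cosh_neg]
  constructor
  · intro t ht
    rw [hH t, hH τ, h1b]
    cases ht with
    | inl h =>
      obtain ⟨h0, h1⟩ := h
      have hCt : Real.cosh ((t - 1/2) * a) = Real.cosh ((1/2 - t) * a) := by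
        rw [show (t - 1/2) * a = -((1/2 - t) * a) by ring, Real.cosh_neg]
      rw [hCt, hCτ]
      apply frac_cmp _ _ _ _ _ _ hE hD
      have key := coshKey a (s := 1/2 - τ) (r := 1/2 - t) (by linarith) (by linarith)
        (by linarith)
      have e3 : τ * (1 - τ) = 1/4 - (1/2 - τ) ^ 2 := by ring
      have e4 : t * (1 - t) = 1/4 - (1/2 - t) ^ 2 := by ring
      rw [e3, e4]
      linarith [key]
    | inr h =>
      obtain ⟨h0, h1⟩ := h
      rw [hCτ]
      apply frac_cmp _ _ _ _ _ _ hE hD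
      have key := coshKey a (s := 1/2 - τ) (r := t - 1/2) (by linarith) (by linarith)
        (by linarith)
      have e3 : τ * (1 - τ) = 1/4 - (1/2 - τ) ^ 2 := by ring
      have e4 : t * (1 - t) = 1/4 - (t - 1/2) ^ 2 := by ring
      rw [e3, e4]
      linarith [key]
  · intro t ht
    obtain ⟨h0, h1⟩ := ht
    rw [hH t, hH τ, h1b]
    rcases le_total t (1/2) with hhalf | hhalf
    · have hCt : Real.cosh ((t - 1/2) * a) = Real.cosh ((1/2 - t) * a) := by
        rw [show (t - 1/2) * a = -((1/2 - t) * a) by ring, Real.cosh_neg]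
      rw [hCt, hCτ]
      apply frac_cmp' _ _ _ _ _ _ hE hD
      have key := coshKey a (s := 1/2 - t) (r := 1/2 - τ) (by linarith) (by linarith)
        (by linarith)
      have e3 : τ * (1 - τ) = 1/4 - (1/2 - τ) ^ 2 := by ring
      have e4 : t * (1 - t) = 1/4 - (1/2 - t) ^ 2 := by ring
      rw [e3, e4]
      linarith [key]
    · rw [hCτ]
      apply frac_cmp' _ _ _ _ _ _ hE hD
      have key := coshKey a (s := t - 1/2) (r := 1/2 - τ) (by linarith) (by linarith)
        (by linarith)
      have e3 : τ * (1 - τ) = 1/4 - (1/2 - τ) ^ 2 := by ring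
      have e4 : t * (1 - t) = 1/4 - (t - 1/2) ^ 2 := by ring
      rw [e3, e4]
      linarith [key]
end

section
/- Let A, B be n×n positive semidefinite complex matrices, X an arbitrary n×n complex matrix, and τ, ν ∈ (0,1) with ν ≤ min{τ,1-τ} or ν ≥ max{τ,1-τ}. Then ‖A^ν X B^{1-ν} + A^{1-ν} X B^ν‖₂² + (ν(1-ν)/(τ(1-τ)))·[‖AX + XB‖₂² - ‖A^τ X B^{1-τ} + A^{1-τ} X B^τ‖₂²] ≤ ‖AX + XB‖₂². -/
/-!
Diagonalise `A = U Λ U*` and `B = V M V*` and put `Y = U* X V`. Every norm in the inequality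
becomes `∑ᵢⱼ h(λᵢ, μⱼ)² |Yᵢⱼ|²` with `h(a, b) = a^t b^(1-t) + a^(1-t) b^t`, so it suffices to
prove the scalar inequality for `a, b ≥ 0`. For `a, b > 0` and `d = log a - log b` one has
`h(a, b)² = 2ab (cosh ((2t-1) d) + 1)`, and the scalar inequality says that
`s ↦ (cosh d - cosh (√s d)) / (1 - s)` is nondecreasing on `[0, 1)`, compared at
`(2τ-1)² ≤ (2ν-1)²`; this order is the hypothesis on `ν`, which amounts to
`ν (1 - ν) ≤ τ (1 - τ)`. Monotonicity holds coefficientwise in the power series in `d²`,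
because `(1 - sᵏ) / (1 - s) = 1 + s + ⋯ + sᵏ⁻¹`.
-/

open Matrix ComplexOrder

/-- Real power of a matrix, defined via the spectral decomposition when the
matrix is Hermitian (and junk value `0` otherwise). -/
noncomputable def mpow {n : ℕ} (A : Matrix (Fin n) (Fin n) ℂ) (t : ℝ) :
    Matrix (Fin n) (Fin n) ℂ :=
  if hA : A.IsHermitian then
    (hA.eigenvectorUnitary : Matrix (Fin n) (Fin n) ℂ) *
      Matrix.diagonal (fun i => ((hA.eigenvalues i ^ t : ℝ) : ℂ)) *
      (star hA.eigenvectorUnitary : Matrix (Fin n) (Fin n) ℂ)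
  else 0

/-- The square of the Hilbert–Schmidt (Frobenius) norm, `‖Y‖₂² = tr (Y Yᴴ)`. -/
noncomputable def hsNormSq {n : ℕ} (Y : Matrix (Fin n) (Fin n) ℂ) : ℝ :=
  (Matrix.trace (Y * Yᴴ)).re

open Real Finset

lemma one_sub_mul_one_sub_pow_le {x y : ℝ} (hy : 0 ≤ y) (hyx : y ≤ x) (hx : x ≤ 1) (k : ℕ) :
    (1 - x) * (1 - y ^ k) ≤ (1 - y) * (1 - x ^ k) := by
  have hgeom : ∑ i ∈ range k, y ^ i ≤ ∑ i ∈ range k, x ^ i :=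
    sum_le_sum fun i _ => pow_le_pow_left₀ hy hyx i
  rw [← geom_sum_mul_neg x, ← geom_sum_mul_neg y]
  nlinarith [mul_le_mul_of_nonneg_left hgeom
    (mul_nonneg (sub_nonneg.2 hx) (sub_nonneg.2 (hyx.trans hx)))]

lemma hasSum_cosh_sub_cosh_mul (w d : ℝ) :
    HasSum (fun k => (1 - (w ^ 2) ^ k) * (d ^ (2 * k) / (2 * k).factorial))
      (cosh d - cosh (w * d)) := by
  have hterm : ∀ k : ℕ, d ^ (2 * k) / (2 * k).factorial - (w * d) ^ (2 * k) / (2 * k).factorial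
      = (1 - (w ^ 2) ^ k) * (d ^ (2 * k) / (2 * k).factorial) := fun k => by
    rw [mul_pow, pow_mul]; ring
  simpa only [hterm] using (hasSum_cosh d).sub (hasSum_cosh (w * d))

lemma one_sub_sq_mul_cosh_sub_cosh_le {u v : ℝ} (hvu : v ^ 2 ≤ u ^ 2) (hu : u ^ 2 ≤ 1) (d : ℝ) :
    (1 - u ^ 2) * (cosh d - cosh (v * d)) ≤ (1 - v ^ 2) * (cosh d - cosh (u * d)) := by
  refine hasSum_le (fun k => ?_) ((hasSum_cosh_sub_cosh_mul v d).mul_left _)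
    ((hasSum_cosh_sub_cosh_mul u d).mul_left _)
  have hcoeff : 0 ≤ d ^ (2 * k) / (2 * k).factorial :=
    div_nonneg ((even_two_mul k).pow_nonneg d) (Nat.cast_nonneg _)
  simpa only [mul_assoc] using
    mul_le_mul_of_nonneg_right (one_sub_mul_one_sub_pow_le (sq_nonneg v) hvu hu k) hcoeff

lemma exp_add_exp_sq (p q : ℝ) :
    (exp p + exp q) ^ 2 = 2 * exp (p + q) * (cosh (p - q) + 1) := by
  have hp : exp (p + q) * exp (p - q) = exp p ^ 2 := by
    rw [← exp_add, sq, ← exp_add]; ring_nf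
  have hq : exp (p + q) * exp (-(p - q)) = exp q ^ 2 := by
    rw [← exp_add, sq, ← exp_add]; ring_nf
  rw [cosh_eq]
  linear_combination -hp - hq - 2 * exp_add p q

noncomputable def heinzSum (a b t : ℝ) : ℝ := a ^ t * b ^ (1 - t) + a ^ (1 - t) * b ^ t

lemma heinzSum_one (a b : ℝ) : heinzSum a b 1 = a + b := by
  simp [heinzSum]

lemma heinzSum_zero_left {b t : ℝ} (ht : t ∈ Set.Ioo (0 : ℝ) 1) : heinzSum 0 b t = 0 := by
  simp [heinzSum, zero_rpow ht.1.ne', zero_rpow (sub_pos.2 ht.2).ne']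

lemma heinzSum_zero_right {a t : ℝ} (ht : t ∈ Set.Ioo (0 : ℝ) 1) : heinzSum a 0 t = 0 := by
  simp [heinzSum, zero_rpow ht.1.ne', zero_rpow (sub_pos.2 ht.2).ne']

lemma heinzSum_sq {a b : ℝ} (ha : 0 < a) (hb : 0 < b) (t : ℝ) :
    heinzSum a b t ^ 2 = 2 * (a * b) * (cosh ((2 * t - 1) * (log a - log b)) + 1) := by
  rw [heinzSum, rpow_def_of_pos ha, rpow_def_of_pos hb, rpow_def_of_pos ha, rpow_def_of_pos hb,
    ← exp_add, ← exp_add, exp_add_exp_sq, ← exp_log ha, ← exp_log hb, ← exp_add, log_exp, log_exp]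
  ring_nf

lemma mul_one_sub_le_of_le_min_or_max_le {τ ν : ℝ} (h : ν ≤ min τ (1 - τ) ∨ max τ (1 - τ) ≤ ν) :
    ν * (1 - ν) ≤ τ * (1 - τ) := by
  have hfactor : τ * (1 - τ) - ν * (1 - ν) = (τ - ν) * (1 - τ - ν) := by ring
  rcases h with h | h
  · nlinarith [mul_nonneg (sub_nonneg.2 (le_min_iff.1 h).1) (sub_nonneg.2 (le_min_iff.1 h).2)]
  · nlinarith [mul_nonneg (sub_nonneg.2 (max_le_iff.1 h).1) (sub_nonneg.2 (max_le_iff.1 h).2)]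

lemma heinzSum_sq_add_le {a b τ ν : ℝ} (ha : 0 ≤ a) (hb : 0 ≤ b)
    (hτ : τ ∈ Set.Ioo (0 : ℝ) 1) (hν : ν ∈ Set.Ioo (0 : ℝ) 1) (hντ : ν * (1 - ν) ≤ τ * (1 - τ)) :
    heinzSum a b ν ^ 2 + ν * (1 - ν) / (τ * (1 - τ)) * ((a + b) ^ 2 - heinzSum a b τ ^ 2)
      ≤ (a + b) ^ 2 := by
  have hτpos : 0 < τ * (1 - τ) := mul_pos hτ.1 (sub_pos.2 hτ.2)
  have hr : ν * (1 - ν) / (τ * (1 - τ)) ≤ 1 := (div_le_one hτpos).2 hντ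
  rcases ha.eq_or_lt with rfl | ha
  · rw [heinzSum_zero_left hν, heinzSum_zero_left hτ]
    nlinarith [sq_nonneg b]
  rcases hb.eq_or_lt with rfl | hb
  · rw [heinzSum_zero_right hν, heinzSum_zero_right hτ]
    nlinarith [sq_nonneg a]
  rw [← heinzSum_one a b, heinzSum_sq ha hb, heinzSum_sq ha hb, heinzSum_sq ha hb,
    show (2 * (1 : ℝ) - 1) = 1 by ring, one_mul]
  set d := log a - log b
  have hu : 1 - (2 * ν - 1) ^ 2 = 4 * (ν * (1 - ν)) := by ring
  have hv : 1 - (2 * τ - 1) ^ 2 = 4 * (τ * (1 - τ)) := by ring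
  have hcosh := one_sub_sq_mul_cosh_sub_cosh_le (u := 2 * ν - 1) (v := 2 * τ - 1)
    (by linarith) (by nlinarith [hν.1, hν.2]) d
  have hkey : ν * (1 - ν) / (τ * (1 - τ)) * (cosh d - cosh ((2 * τ - 1) * d))
      ≤ cosh d - cosh ((2 * ν - 1) * d) := by
    rw [div_mul_eq_mul_div, div_le_iff₀ hτpos]
    nlinarith
  nlinarith [mul_le_mul_of_nonneg_left hkey (by positivity : 0 ≤ 2 * (a * b))]

section Matrix

variable {n : ℕ}

lemma mpow_of_isHermitian {A : Matrix (Fin n) (Fin n) ℂ} (hA : A.IsHermitian) (t : ℝ) :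
    mpow A t = (hA.eigenvectorUnitary : Matrix (Fin n) (Fin n) ℂ) *
      diagonal (fun i => ((hA.eigenvalues i ^ t : ℝ) : ℂ)) *
      (star hA.eigenvectorUnitary : Matrix (Fin n) (Fin n) ℂ) :=
  dif_pos hA

lemma mpow_zero {A : Matrix (Fin n) (Fin n) ℂ} (hA : A.IsHermitian) : mpow A 0 = 1 := by
  simp only [mpow_of_isHermitian hA, rpow_zero, Complex.ofReal_one, diagonal_one, Matrix.mul_one]
  exact Unitary.mul_star_self_of_mem hA.eigenvectorUnitary.2

lemma mpow_one {A : Matrix (Fin n) (Fin n) ℂ} (hA : A.IsHermitian) : mpow A 1 = A := by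
  simp only [mpow_of_isHermitian hA, rpow_one]
  exact hA.spectral_theorem.symm

lemma hsNormSq_eq_sum_normSq (Y : Matrix (Fin n) (Fin n) ℂ) :
    hsNormSq Y = ∑ i, ∑ j, Complex.normSq (Y i j) := by
  simp only [hsNormSq, trace, diag_apply, mul_apply, conjTranspose_apply, RCLike.star_def,
    Complex.mul_conj, Complex.re_sum, Complex.ofReal_re]

lemma hsNormSq_unitary_mul_mul_star {U V : Matrix (Fin n) (Fin n) ℂ}
    (hU : U ∈ unitary (Matrix (Fin n) (Fin n) ℂ)) (hV : V ∈ unitary (Matrix (Fin n) (Fin n) ℂ))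
    (M : Matrix (Fin n) (Fin n) ℂ) : hsNormSq (U * M * star V) = hsNormSq M := by
  have hcancel : U * M * star V * (U * M * star V)ᴴ = U * (M * Mᴴ) * star U := by
    rw [← star_eq_conjTranspose, ← star_eq_conjTranspose, star_mul, star_mul, star_star]
    calc U * M * star V * (V * (star M * star U))
        = U * M * (star V * V) * star M * star U := by simp only [Matrix.mul_assoc]
      _ = U * (M * star M) * star U := by
        rw [Unitary.star_mul_self_of_mem hV, Matrix.mul_one]; simp only [Matrix.mul_assoc]
  rw [hsNormSq, hsNormSq, hcancel, trace_mul_cycle, ← Matrix.mul_assoc,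
    Unitary.star_mul_self_of_mem hU, Matrix.one_mul]

lemma mpow_mul_mul_mpow {A B : Matrix (Fin n) (Fin n) ℂ} (hA : A.IsHermitian) (hB : B.IsHermitian)
    (X : Matrix (Fin n) (Fin n) ℂ) (s t : ℝ) :
    mpow A s * X * mpow B t = (hA.eigenvectorUnitary : Matrix (Fin n) (Fin n) ℂ) *
      (diagonal (fun i => ((hA.eigenvalues i ^ s : ℝ) : ℂ)) *
        (star (hA.eigenvectorUnitary : Matrix (Fin n) (Fin n) ℂ) * X * hB.eigenvectorUnitary) *
        diagonal (fun j => ((hB.eigenvalues j ^ t : ℝ) : ℂ))) *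
      star (hB.eigenvectorUnitary : Matrix (Fin n) (Fin n) ℂ) := by
  simp only [mpow_of_isHermitian hA, mpow_of_isHermitian hB, Matrix.mul_assoc]

lemma hsNormSq_mpow_heinz {A B : Matrix (Fin n) (Fin n) ℂ} (hA : A.IsHermitian)
    (hB : B.IsHermitian) (X : Matrix (Fin n) (Fin n) ℂ) (t : ℝ) :
    hsNormSq (mpow A t * X * mpow B (1 - t) + mpow A (1 - t) * X * mpow B t)
      = ∑ i, ∑ j, heinzSum (hA.eigenvalues i) (hB.eigenvalues j) t ^ 2 *
        Complex.normSq ((star (hA.eigenvectorUnitary : Matrix (Fin n) (Fin n) ℂ) * X *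
          hB.eigenvectorUnitary) i j) := by
  rw [mpow_mul_mul_mpow hA hB, mpow_mul_mul_mpow hA hB, ← Matrix.add_mul, ← Matrix.mul_add,
    hsNormSq_unitary_mul_mul_star hA.eigenvectorUnitary.2 hB.eigenvectorUnitary.2,
    hsNormSq_eq_sum_normSq]
  refine sum_congr rfl fun i _ => sum_congr rfl fun j _ => ?_
  simp only [Matrix.add_apply, mul_diagonal, diagonal_mul]
  rw [sq, ← Complex.normSq_ofReal, ← Complex.normSq_mul]
  congr 1
  simp only [heinzSum]
  push_cast
  ring

end Matrix

theorem matrix_quadratic_heinz {n : ℕ} (A B X : Matrix (Fin n) (Fin n) ℂ)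
    (hA : A.PosSemidef) (hB : B.PosSemidef) (τ ν : ℝ)
    (hτ : τ ∈ Set.Ioo (0:ℝ) 1) (hν : ν ∈ Set.Ioo (0:ℝ) 1)
    (h : ν ≤ min τ (1 - τ) ∨ max τ (1 - τ) ≤ ν) :
    hsNormSq (mpow A ν * X * mpow B (1 - ν) + mpow A (1 - ν) * X * mpow B ν)
      + (ν * (1 - ν) / (τ * (1 - τ))) *
        (hsNormSq (A * X + X * B)
          - hsNormSq (mpow A τ * X * mpow B (1 - τ) + mpow A (1 - τ) * X * mpow B τ))
      ≤ hsNormSq (A * X + X * B) := by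
  have hsum : A * X + X * B = mpow A 1 * X * mpow B (1 - 1) + mpow A (1 - 1) * X * mpow B 1 := by
    rw [sub_self, mpow_one hA.1, mpow_zero hA.1, mpow_one hB.1, mpow_zero hB.1, Matrix.mul_one,
      Matrix.one_mul]
  rw [hsum, hsNormSq_mpow_heinz hA.1 hB.1, hsNormSq_mpow_heinz hA.1 hB.1,
    hsNormSq_mpow_heinz hA.1 hB.1]
  simp only [heinzSum_one, mul_sum, ← sum_sub_distrib, ← sum_add_distrib]
  refine sum_le_sum fun i _ => sum_le_sum fun j _ => ?_
  have hscalar := heinzSum_sq_add_le (hA.eigenvalues_nonneg i) (hB.eigenvalues_nonneg j) hτ hν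
    (mul_one_sub_le_of_le_min_or_max_le h)
  linear_combination mul_le_mul_of_nonneg_right hscalar (Complex.normSq_nonneg _)
end
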